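/- Let φ, θ be smooth fields on the torus with θ > 0, let γ > 0, μ = -γΔφ + ∂_φΨ(φ,θ), e = ∂_θΨ̃, s = θe - Ψ̃ with Ψ̃(φ,θ) = Ψ(φ,θ) + (γ/2)|∇φ|², and σ = (γ/θ)∇φ⊗∇φ. Then the Korteweg stress satisfies the pointwise identity div σ = -(μ/θ)∇φ + θσ∇(1/θ) - (1/θ)∇s + ∇e, and equivalently div σ = (φ/θ)∇μ + (s + φμ)∇(1/θ) + θσ∇(1/θ) - ∇((s+φμ)/θ) + ∇e. -/

import Mathlib

/-- Partial derivative of a scalar field along the `i`-th coordinate direction. -/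
noncomputable def pd {d : ℕ} (f : EuclideanSpace ℝ (Fin d) → ℝ) (i : Fin d)
    (x : EuclideanSpace ℝ (Fin d)) : ℝ :=
  fderiv ℝ f x (EuclideanSpace.single i (1:ℝ))

/-- Expansion of the Korteweg stress: with `μ = −γΔφ + ∂_φΨ(φ,θ)`, `e = ∂_θΨ̃`,
`s = θe − Ψ̃`, `Ψ̃ = Ψ + (γ/2)|∇φ|²` and `σ = (γ/θ)∇φ⊗∇φ`, one has pointwise
`div σ = −(μ/θ)∇φ + θσ∇(1/θ) − (1/θ)∇s + ∇e`, and equivalently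
`div σ = (φ/θ)∇μ + (s + φμ)∇(1/θ) + θσ∇(1/θ) − ∇((s+φμ)/θ) + ∇e`. -/
theorem korteweg_stress_expansion {d : ℕ} (γ : ℝ) (hγ : 0 < γ)
    (φ θ μ e s : EuclideanSpace ℝ (Fin d) → ℝ)
    (σ : EuclideanSpace ℝ (Fin d) → Fin d → Fin d → ℝ)
    (Ψ : ℝ → ℝ → ℝ)
    (hφ : ContDiff ℝ 3 φ) (hθ : ContDiff ℝ 1 θ) (hθpos : ∀ x, 0 < θ x)
    (hΨ : ContDiff ℝ 2 (fun pr : ℝ × ℝ => Ψ pr.1 pr.2))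
    (hμ : ∀ x, μ x = -γ * (∑ j, pd (pd φ j) j x) + deriv (fun a => Ψ a (θ x)) (φ x))
    (he : ∀ x, e x = deriv (fun b => Ψ (φ x) b) (θ x))
    (hs : ∀ x, s x = θ x * e x - (Ψ (φ x) (θ x) + (γ/2) * ∑ j, (pd φ j x)^2))
    (hσ : ∀ x i j, σ x i j = (γ / θ x) * pd φ i x * pd φ j x) :
    ∀ (x : EuclideanSpace ℝ (Fin d)) (i : Fin d),
      ((∑ j, pd (fun y => σ y i j) j x)
        = -(μ x / θ x) * pd φ i x
          + θ x * ∑ j, σ x i j * pd (fun y => 1 / θ y) j x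
          - (1 / θ x) * pd s i x
          + pd e i x) ∧
      ((∑ j, pd (fun y => σ y i j) j x)
        = (φ x / θ x) * pd μ i x
          + (s x + φ x * μ x) * pd (fun y => 1 / θ y) i x
          + θ x * ∑ j, σ x i j * pd (fun y => 1 / θ y) j x
          - pd (fun y => (s y + φ y * μ y) / θ y) i x
          + pd e i x) := by
  intro x i
  have hθx : θ x ≠ 0 := ne_of_gt (hθpos x)
  have ε : Fin d → EuclideanSpace ℝ (Fin d) := fun j => EuclideanSpace.single j (1:ℝ)
  -- basic differentiability facts
  have hφd : ∀ y, HasFDerivAt φ (fderiv ℝ φ y) y := fun y =>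
    ((hφ.differentiable (by norm_num)) y).hasFDerivAt
  have hφ' : ContDiff ℝ 2 (fderiv ℝ φ) := hφ.fderiv_right (by norm_num)
  have hD2 : HasFDerivAt (fderiv ℝ φ) (fderiv ℝ (fderiv ℝ φ) x) x :=
    ((hφ'.differentiable (by norm_num)) x).hasFDerivAt
  have hsym : ∀ v w, fderiv ℝ (fderiv ℝ φ) x v w = fderiv ℝ (fderiv ℝ φ) x w v :=
    second_derivative_symmetric hφd hD2
  have hθd : HasFDerivAt θ (fderiv ℝ θ x) x := ((hθ.differentiable (by norm_num)) x).hasFDerivAt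
  -- derivative of pd φ j
  have hgj : ∀ (j : Fin d) (y : EuclideanSpace ℝ (Fin d)),
      HasFDerivAt (pd φ j)
        ((fderiv ℝ (fderiv ℝ φ) y).flip (EuclideanSpace.single j (1:ℝ))) y := by
    intro j y
    have h := (((hφ'.differentiable (by norm_num)) y).hasFDerivAt).clm_apply
      (hasFDerivAt_const (EuclideanSpace.single j (1:ℝ)) y)
    simp at h
    exact h
  have hgC2 : ∀ j : Fin d, ContDiff ℝ 2 (pd φ j) := fun j =>
    hφ'.clm_apply contDiff_const
  -- 1/θ
  have hιdiff : DifferentiableAt ℝ (fun y => 1 / θ y) x := by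
    have h : DifferentiableAt ℝ (fun y => (θ y)⁻¹) x := hθd.differentiableAt.inv hθx
    simpa [one_div] using h
  have hιd : HasFDerivAt (fun y => 1 / θ y) (fderiv ℝ (fun y => 1 / θ y) x) x :=
    hιdiff.hasFDerivAt
  -- Ψ on the product
  have hPd : ∀ p : ℝ × ℝ, HasFDerivAt (fun pr : ℝ × ℝ => Ψ pr.1 pr.2)
      (fderiv ℝ (fun pr : ℝ × ℝ => Ψ pr.1 pr.2) p) p := fun p =>
    ((hΨ.differentiable (by norm_num)) p).hasFDerivAt
  have hderiv1 : ∀ y, deriv (fun a => Ψ a (θ y)) (φ y)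
      = fderiv ℝ (fun pr : ℝ × ℝ => Ψ pr.1 pr.2) (φ y, θ y) ((1:ℝ), (0:ℝ)) := by
    intro y
    have h1 : HasDerivAt (fun a : ℝ => (a, θ y)) ((1:ℝ), (0:ℝ)) (φ y) :=
      (hasDerivAt_id _).prodMk (hasDerivAt_const _ _)
    exact ((hPd (φ y, θ y)).comp_hasDerivAt (φ y) h1).deriv
  have hderiv2 : ∀ y, deriv (fun b => Ψ (φ y) b) (θ y)
      = fderiv ℝ (fun pr : ℝ × ℝ => Ψ pr.1 pr.2) (φ y, θ y) ((0:ℝ), (1:ℝ)) := by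
    intro y
    have h1 : HasDerivAt (fun b : ℝ => (φ y, b)) ((0:ℝ), (1:ℝ)) (θ y) :=
      (hasDerivAt_const _ _).prodMk (hasDerivAt_id _)
    exact ((hPd (φ y, θ y)).comp_hasDerivAt (θ y) h1).deriv
  have hsplit : ∀ a b : ℝ,
      fderiv ℝ (fun pr : ℝ × ℝ => Ψ pr.1 pr.2) (φ x, θ x) (a, b)
        = a * fderiv ℝ (fun pr : ℝ × ℝ => Ψ pr.1 pr.2) (φ x, θ x) ((1:ℝ), (0:ℝ))
          + b * fderiv ℝ (fun pr : ℝ × ℝ => Ψ pr.1 pr.2) (φ x, θ x) ((0:ℝ), (1:ℝ)) := by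
    intro a b
    have h : ((a, b) : ℝ × ℝ) = a • ((1:ℝ), (0:ℝ)) + b • ((0:ℝ), (1:ℝ)) := by
      simp [Prod.ext_iff]
    rw [h, map_add, map_smul, map_smul, smul_eq_mul, smul_eq_mul]
  -- e is differentiable
  have hF : ContDiff ℝ 1 (fderiv ℝ (fun pr : ℝ × ℝ => Ψ pr.1 pr.2)) :=
    hΨ.fderiv_right (by norm_num)
  have hpair : DifferentiableAt ℝ (fun z => (φ z, θ z)) x :=
    ((hφd x).differentiableAt).prodMk (hθ.differentiable (by norm_num) x)
  have heDiff : DifferentiableAt ℝ e x := by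
    have heeq : e = fun y =>
        fderiv ℝ (fun pr : ℝ × ℝ => Ψ pr.1 pr.2) (φ y, θ y) ((0:ℝ), (1:ℝ)) := by
      funext y; rw [he y, hderiv2 y]
    rw [heeq]
    exact (((hF.differentiable (by norm_num)) (φ x, θ x)).comp x hpair).clm_apply
      (differentiableAt_const _)
  have hed : HasFDerivAt e (fderiv ℝ e x) x := heDiff.hasFDerivAt
  -- composite Ψ(φ, θ)
  have hPc : HasFDerivAt (fun y => Ψ (φ y) (θ y))
      ((fderiv ℝ (fun pr : ℝ × ℝ => Ψ pr.1 pr.2) (φ x, θ x)).comp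
        ((fderiv ℝ φ x).prod (fderiv ℝ θ x))) x :=
    (hPd (φ x, θ x)).comp (f := fun y => (φ y, θ y)) x ((hφd x).prodMk hθd)
  -- s
  have hsd : HasFDerivAt s
      ((θ x • fderiv ℝ e x + e x • fderiv ℝ θ x)
        - ((fderiv ℝ (fun pr : ℝ × ℝ => Ψ pr.1 pr.2) (φ x, θ x)).comp
            ((fderiv ℝ φ x).prod (fderiv ℝ θ x))
          + (γ/2) • ∑ j, (pd φ j x • ((fderiv ℝ (fderiv ℝ φ) x).flip (EuclideanSpace.single j (1:ℝ)))
              + pd φ j x • ((fderiv ℝ (fderiv ℝ φ) x).flip (EuclideanSpace.single j (1:ℝ)))))) x := by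
    have hseq : s = fun y => θ y * e y
        - (Ψ (φ y) (θ y) + (γ/2) * ∑ j, pd φ j y * pd φ j y) := by
      funext y; rw [hs y]; simp [pow_two]
    rw [hseq]
    exact (hθd.mul hed).sub (hPc.add ((HasFDerivAt.fun_sum
      (fun j _ => (hgj j x).mul (hgj j x))).const_mul (γ/2)))
  -- value of pd s
  have hpds : pd s i x = θ x * pd e i x
      - pd φ i x * fderiv ℝ (fun pr : ℝ × ℝ => Ψ pr.1 pr.2) (φ x, θ x) ((1:ℝ), (0:ℝ))
      - γ * ∑ j, pd φ j x * fderiv ℝ (fderiv ℝ φ) x (EuclideanSpace.single i (1:ℝ))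
          (EuclideanSpace.single j (1:ℝ)) := by
    have h0 : pd s i x = _ := congrFun (congrArg _ hsd.fderiv) (EuclideanSpace.single i (1:ℝ))
    rw [pd] at h0 ⊢
    rw [h0]
    have hex : e x = fderiv ℝ (fun pr : ℝ × ℝ => Ψ pr.1 pr.2) (φ x, θ x) ((0:ℝ), (1:ℝ)) := by
      rw [he x, hderiv2 x]
    simp only [ContinuousLinearMap.coe_sub', Pi.sub_apply, ContinuousLinearMap.add_apply,
      ContinuousLinearMap.coe_smul', Pi.smul_apply, ContinuousLinearMap.comp_apply,
      ContinuousLinearMap.prod_apply, ContinuousLinearMap.coe_sum', Finset.sum_apply,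
      ContinuousLinearMap.flip_apply, smul_eq_mul, pd]
    rw [hsplit, ← hex, Finset.sum_add_distrib]
    ring
  -- value of the divergence of σ, row i, column j
  have hA : ∀ j : Fin d, pd (fun y => σ y i j) j x
      = γ / θ x * pd φ i x * fderiv ℝ (fderiv ℝ φ) x (EuclideanSpace.single j (1:ℝ))
          (EuclideanSpace.single j (1:ℝ))
        + (γ / θ x * (pd φ j x * fderiv ℝ (fderiv ℝ φ) x (EuclideanSpace.single i (1:ℝ))
            (EuclideanSpace.single j (1:ℝ)))
          + γ * pd φ i x * (pd φ j x * pd (fun y => 1 / θ y) j x)) := by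
    intro j
    have hσf : (fun y => σ y i j) = fun y => γ * (1 / θ y * (pd φ i y * pd φ j y)) := by
      funext y; rw [hσ y i j]; ring
    have hL : HasFDerivAt (fun y => γ * (1 / θ y * (pd φ i y * pd φ j y)))
        (γ • ((1 / θ x) • (pd φ i x • ((fderiv ℝ (fderiv ℝ φ) x).flip (EuclideanSpace.single j (1:ℝ)))
            + pd φ j x • ((fderiv ℝ (fderiv ℝ φ) x).flip (EuclideanSpace.single i (1:ℝ))))
          + (pd φ i x * pd φ j x) • fderiv ℝ (fun y => 1 / θ y) x)) x :=
      (hιd.mul ((hgj i x).mul (hgj j x))).const_mul γ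
    rw [hσf, pd, hL.fderiv]
    simp only [ContinuousLinearMap.coe_smul', Pi.smul_apply, ContinuousLinearMap.add_apply,
      ContinuousLinearMap.smul_apply, ContinuousLinearMap.flip_apply, smul_eq_mul, pd]
    rw [hsym (EuclideanSpace.single j (1:ℝ)) (EuclideanSpace.single i (1:ℝ))]
    ring
  -- second partials of φ
  have hBj : ∀ j : Fin d, pd (pd φ j) j x
      = fderiv ℝ (fderiv ℝ φ) x (EuclideanSpace.single j (1:ℝ))
          (EuclideanSpace.single j (1:ℝ)) := by
    intro j
    rw [pd, (hgj j x).fderiv]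
    simp [ContinuousLinearMap.flip_apply]
  -- value of μ at x
  have hμx : μ x = -γ * (∑ j, fderiv ℝ (fderiv ℝ φ) x (EuclideanSpace.single j (1:ℝ))
        (EuclideanSpace.single j (1:ℝ)))
      + fderiv ℝ (fun pr : ℝ × ℝ => Ψ pr.1 pr.2) (φ x, θ x) ((1:ℝ), (0:ℝ)) := by
    rw [hμ x, hderiv1 x]
    congr 2
    exact Finset.sum_congr rfl fun j _ => hBj j
  -- the σ ∇(1/θ) sum
  have hRS3 : (∑ j, σ x i j * pd (fun y => 1 / θ y) j x)
      = γ / θ x * pd φ i x * ∑ j, pd φ j x * pd (fun y => 1 / θ y) j x := by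
    rw [Finset.mul_sum]
    exact Finset.sum_congr rfl fun j _ => by rw [hσ x i j]; ring
  -- Part 1
  have h1 : (∑ j, pd (fun y => σ y i j) j x)
      = -(μ x / θ x) * pd φ i x
        + θ x * ∑ j, σ x i j * pd (fun y => 1 / θ y) j x
        - (1 / θ x) * pd s i x
        + pd e i x := by
    rw [Finset.sum_congr rfl fun j _ => hA j, Finset.sum_add_distrib,
      ← Finset.mul_sum, Finset.sum_add_distrib, ← Finset.mul_sum, ← Finset.mul_sum,
      hpds, hμx, hRS3]
    field_simp
    ring
  refine ⟨h1, ?_⟩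
  -- differentiability of μ
  have hμdiff : DifferentiableAt ℝ μ x := by
    have hpart2 : DifferentiableAt ℝ (fun y => deriv (fun a => Ψ a (θ y)) (φ y)) x := by
      have hfe : (fun y => deriv (fun a => Ψ a (θ y)) (φ y))
          = fun y => fderiv ℝ (fun pr : ℝ × ℝ => Ψ pr.1 pr.2) (φ y, θ y) ((1:ℝ), (0:ℝ)) :=
        funext hderiv1
      rw [hfe]
      exact (((hF.differentiable (by norm_num)) (φ x, θ x)).comp x hpair).clm_apply
        (differentiableAt_const _)
    have hpart1 : DifferentiableAt ℝ (fun y => ∑ j, pd (pd φ j) j y) x := by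
      apply DifferentiableAt.fun_sum
      intro j _
      have h1' : ContDiff ℝ 1 (fderiv ℝ (pd φ j)) := (hgC2 j).fderiv_right (by norm_num)
      have h2 := ((h1'.differentiable (by norm_num)) x).clm_apply
        (differentiableAt_const (EuclideanSpace.single j (1:ℝ)))
      exact h2
    have hμeq : μ = fun y => -γ * (∑ j, pd (pd φ j) j y) + deriv (fun a => Ψ a (θ y)) (φ y) :=
      funext hμ
    rw [hμeq]
    exact (hpart1.const_mul (-γ)).add hpart2
  have hμd' : HasFDerivAt μ (fderiv ℝ μ x) x := hμdiff.hasFDerivAt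
  have hsd' : HasFDerivAt s (fderiv ℝ s x) x := hsd.differentiableAt.hasFDerivAt
  have hq : pd (fun y => (s y + φ y * μ y) / θ y) i x
      = (s x + φ x * μ x) * pd (fun y => 1 / θ y) i x
        + 1 / θ x * (pd s i x + (φ x * pd μ i x + μ x * pd φ i x)) := by
    have hfun : (fun y => (s y + φ y * μ y) / θ y)
        = fun y => (s y + φ y * μ y) * (1 / θ y) :=
      funext fun y => div_eq_mul_one_div _ _
    have hL : HasFDerivAt (fun y => (s y + φ y * μ y) * (1 / θ y))
        ((s x + φ x * μ x) • fderiv ℝ (fun y => 1 / θ y) x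
          + (1 / θ x) • (fderiv ℝ s x + (φ x • fderiv ℝ μ x + μ x • fderiv ℝ φ x))) x :=
      (hsd'.add ((hφd x).mul hμd')).mul hιd
    rw [hfun, pd, hL.fderiv]
    simp only [ContinuousLinearMap.add_apply, ContinuousLinearMap.coe_smul', Pi.smul_apply,
      ContinuousLinearMap.smul_apply, smul_eq_mul, pd]
  rw [h1, hq]
  field_simp
  ring
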